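/- For every r > 0, 2r(sinhc(2r) − 1) = (4/3) r³ + O(r⁵) as r → 0; moreover if a probability measure μ on hyperbolic n-space is supported in a ball of radius r, then its center of mass p and its cosh-center of mass q satisfy d(p,q) ≤ 2r(sinhc(2r) − 1). -/

import Mathlib

/-!
Strong convexity of `½ d(·, x)²` along the geodesic `γ` from `p` to `q` gives, pointwise,
`d(p,q)² ≤ ⟨log_p x, log_p q⟩ + ⟨log_q x, log_q p⟩`; since
`cosh d(γ t, x) = A cosh t + B sinh t`, this is a one-variable derivative estimate.
Integrating against `μ`, the first term vanishes because `p` is the center of mass, and because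
`q` is the cosh-center the second one equals `∫ (1 - sinhc d(q,x)) ⟨log_q x, log_q p⟩ dμ`, which
is at most `(sinh 2r - 2r) d(p,q)` provided `d(q,x) ≤ 2r`. That holds since `q` itself lies in
the ball: `sinhc d(q,x) · log_q x = x + ⟨q,x⟩ q`, so pairing the equation defining `q` with the
tangent projection of the center `c` would otherwise integrate a positive function to `0`.
Finally `2r (sinhc 2r - 1) = sinh 2r - 2r`, and the asymptotics are the Taylor expansion of
`sinh`.
-/

noncomputable section

/-- The Minkowski bilinear form on `ℝ^{n,1}`. -/
def mink (n : ℕ) (x y : Fin (n+1) → ℝ) : ℝ :=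
  (∑ i : Fin n, x i.castSucc * y i.castSucc) - x (Fin.last n) * y (Fin.last n)

/-- Membership in the hyperboloid model of hyperbolic `n`-space. -/
def IsHyp (n : ℕ) (x : Fin (n+1) → ℝ) : Prop :=
  mink n x x = -1 ∧ 0 < x (Fin.last n)

/-- Tangency to the hyperboloid at `x`. -/
def IsTang (n : ℕ) (x v : Fin (n+1) → ℝ) : Prop := mink n x v = 0

/-- Inverse hyperbolic cosine. -/
def acosh (x : ℝ) : ℝ := Real.log (x + Real.sqrt (x ^ 2 - 1))

/-- Hyperbolic distance in the hyperboloid model: `cosh (dist x y) = -⟨x,y⟩`. -/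
def hdist (n : ℕ) (x y : Fin (n+1) → ℝ) : ℝ := acosh (-(mink n x y))

/-- Norm of a tangent vector (the Minkowski form is positive definite on tangent spaces). -/
def tnorm (n : ℕ) (v : Fin (n+1) → ℝ) : ℝ := Real.sqrt (mink n v v)

/-- The Riemannian exponential map of the hyperboloid. -/
def hexp (n : ℕ) (x v : Fin (n+1) → ℝ) : Fin (n+1) → ℝ :=
  Real.cosh (tnorm n v) • x + (Real.sinh (tnorm n v) / tnorm n v) • v

/-- Unit tangent vector at `x` pointing towards `y`. -/
def hdir (n : ℕ) (x y : Fin (n+1) → ℝ) : Fin (n+1) → ℝ :=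
  (Real.sinh (hdist n x y))⁻¹ • (y + (mink n x y) • x)

/-- The inverse exponential map `exp_x⁻¹ (y)`. -/
def hlog (n : ℕ) (x y : Fin (n+1) → ℝ) : Fin (n+1) → ℝ :=
  hdist n x y • hdir n x y

/-- Parallel transport from `T_y ℍⁿ` to `T_x ℍⁿ` along the geodesic from `y` to `x`. -/
def ptrans (n : ℕ) (x y v : Fin (n+1) → ℝ) : Fin (n+1) → ℝ :=
  v + ((mink n x v) / (1 - mink n x y)) • (x + y)

/-- Minkowski volume form on `ℝ^{2,1}`; `det3 x u w = ‖u‖‖w‖ sin θ` for tangent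
vectors `u, w` at `x ∈ ℍ²`, where `θ` is the oriented angle from `u` to `w`. -/
def det3 (a b c : Fin 3 → ℝ) : ℝ :=
  a 0 * (b 1 * c 2 - b 2 * c 1) - a 1 * (b 0 * c 2 - b 2 * c 0)
    + a 2 * (b 0 * c 1 - b 1 * c 0)

/-- `sinhc x = sinh x / x`, with `sinhc 0 = 1`. -/
def sinhc (x : ℝ) : ℝ := if x = 0 then 1 else Real.sinh x / x

open MeasureTheory

open Real Filter Topology Asymptotics

lemma abs_sinh_sub_taylor_le {x : ℝ} (hx : |x| ≤ 1) :
    |sinh x - x - x ^ 3 / 6| ≤ |x| ^ 5 / 100 := by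
  have hpos := Real.exp_bound hx (n := 5) (by norm_num)
  have hneg := Real.exp_bound (x := -x) (by rwa [abs_neg]) (n := 5) (by norm_num)
  simp only [Finset.sum_range_succ, Finset.sum_range_zero, abs_neg] at hpos hneg
  norm_num [Nat.factorial] at hpos hneg
  rw [sinh_eq]
  have hsplit : (exp x - exp (-x)) / 2 - x - x ^ 3 / 6
      = ((exp x - (1 + x + x ^ 2 / 2 + x ^ 3 / 6 + x ^ 4 / 24))
        - (exp (-x) - (1 - x + x ^ 2 / 2 - x ^ 3 / 6 + x ^ 4 / 24))) / 2 := by ring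
  rw [hsplit, abs_div, abs_two]
  have := abs_sub (exp x - (1 + x + x ^ 2 / 2 + x ^ 3 / 6 + x ^ 4 / 24))
    (exp (-x) - (1 - x + x ^ 2 / 2 - x ^ 3 / 6 + x ^ 4 / 24))
  ring_nf at hpos hneg this ⊢
  linarith

lemma sinh_sub_taylor_isBigO :
    (fun x : ℝ => sinh x - x - x ^ 3 / 6) =O[𝓝 0] (fun x => x ^ 5) := by
  refine isBigO_iff.2 ⟨1 / 100, ?_⟩
  filter_upwards [eventually_abs_sub_lt 0 one_pos] with x hx
  rw [sub_zero] at hx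
  simpa [abs_pow, div_eq_inv_mul, mul_comm] using abs_sinh_sub_taylor_le hx.le

lemma mul_sinhc_sub_one (x : ℝ) : x * (sinhc x - 1) = sinh x - x := by
  rcases eq_or_ne x 0 with rfl | hx
  · simp
  · rw [sinhc, if_neg hx]; field_simp

lemma one_le_sinhc (x : ℝ) : 1 ≤ sinhc x := by
  rw [sinhc]
  split_ifs with h
  · exact le_rfl
  rcases lt_or_gt_of_ne h with h | h
  · rw [le_div_iff_of_neg h, one_mul]; exact sinh_le_self_iff.2 h.le
  · rw [le_div_iff₀ h, one_mul]; exact self_le_sinh_iff.2 h.le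

theorem sinhc_bound_isBigO :
    (fun r : ℝ => 2 * r * (sinhc (2 * r) - 1) - (4 / 3) * r ^ 3) =O[𝓝 0] (fun r => r ^ 5) := by
  have h2 : Tendsto (fun r : ℝ => 2 * r) (𝓝 0) (𝓝 0) := by
    simpa using (continuous_const_mul (2 : ℝ)).tendsto 0
  refine ((sinh_sub_taylor_isBigO.comp_tendsto h2).congr_left fun r => ?_).trans ?_
  · simp only [Function.comp_apply, mul_sinhc_sub_one]; ring
  · exact (isBigO_const_mul_self (2 ^ 5 : ℝ) (fun r : ℝ => r ^ 5) (𝓝 0)).congr_left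
      fun r => by simp only [Function.comp_apply, mul_pow]

lemma div_sinh_nonneg {t : ℝ} (ht : 0 ≤ t) : 0 ≤ t / sinh t :=
  div_nonneg ht (sinh_nonneg_iff.2 ht)

lemma div_sinh_le_one {t : ℝ} (ht : 0 ≤ t) : t / sinh t ≤ 1 := by
  rcases ht.eq_or_lt with rfl | ht
  · simp
  · exact (div_le_one (sinh_pos_iff.2 ht)).2 (self_le_sinh_iff.2 ht.le)

lemma div_sinh_mul_sinh (t : ℝ) : t / sinh t * sinh t = t := by
  rcases eq_or_ne t 0 with rfl | ht
  · simp
  · exact div_mul_cancel₀ t (sinh_ne_zero.2 ht)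

lemma sinh_le_mul_cosh {s : ℝ} (hs : 0 ≤ s) : sinh s ≤ s * cosh s := by
  have hmono : MonotoneOn (fun t => t * cosh t - sinh t) (Set.Ici 0) := by
    have hderiv (t : ℝ) : HasDerivAt (fun t => t * cosh t - sinh t) (t * sinh t) t :=
      (((hasDerivAt_id' t).mul (hasDerivAt_cosh t)).sub (hasDerivAt_sinh t)).congr_deriv
        (by ring)
    refine monotoneOn_of_deriv_nonneg (convex_Ici 0)
      (fun t _ => (hderiv t).continuousAt.continuousWithinAt)
      (fun t _ => (hderiv t).differentiableAt.differentiableWithinAt) fun t ht => ?_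
    rw [interior_Ici, Set.mem_Ioi] at ht
    rw [(hderiv t).deriv]
    exact mul_nonneg ht.le (sinh_nonneg_iff.2 ht.le)
  simpa using hmono Set.self_mem_Ici hs hs

section GeodesicDistance

/-- If `cosh d(γ t, x) = A cosh t + B sinh t` along a unit-speed geodesic `γ`, this is
`d(γ t, x) · (d/dt) d(γ t, x)`, the derivative of `t ↦ d(γ t, x)² / 2`. -/
def halfDistSqDeriv (A B t : ℝ) : ℝ :=
  arcosh (A * cosh t + B * sinh t) * (A * sinh t + B * cosh t)
    / √((A * cosh t + B * sinh t) ^ 2 - 1)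

lemma halfDistSqDeriv_cosh_sinh (s t : ℝ) : halfDistSqDeriv (cosh s) (sinh s) t = t + s := by
  have hcosh : cosh s * cosh t + sinh s * sinh t = cosh (t + s) := by rw [cosh_add]; ring
  have hsinh : cosh s * sinh t + sinh s * cosh t = sinh (t + s) := by rw [sinh_add]; ring
  rw [halfDistSqDeriv, hcosh, hsinh, cosh_sq', add_sub_cancel_left, sqrt_sq_eq_abs, ← cosh_abs,
    arcosh_cosh (abs_nonneg _)]
  rcases eq_or_ne (t + s) 0 with hu | hu
  · simp [hu]
  have hsinh0 : sinh (t + s) ≠ 0 := sinh_ne_zero.2 hu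
  rcases le_total 0 (t + s) with h | h
  · rw [abs_of_nonneg h, abs_of_nonneg (sinh_nonneg_iff.2 h)]; field_simp
  · rw [abs_of_nonpos h, abs_of_nonpos (sinh_nonpos_iff.2 h)]; field_simp

lemma one_lt_cosh_comb {A B : ℝ} (hA : 0 ≤ A) (hAB : 1 < A ^ 2 - B ^ 2) (t : ℝ) :
    1 < A * cosh t + B * sinh t := by
  have hid : (A * cosh t + B * sinh t) ^ 2 - (A * sinh t + B * cosh t) ^ 2 = A ^ 2 - B ^ 2 := by
    linear_combination (A ^ 2 - B ^ 2) * cosh_sq_sub_sinh_sq t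
  have hsq : (B * sinh t) ^ 2 < (A * cosh t) ^ 2 := by
    nlinarith [cosh_sq t, sq_nonneg (sinh t)]
  have hpos := (abs_lt_of_sq_lt_sq' hsq (by positivity)).1
  nlinarith [sq_nonneg (A * sinh t + B * cosh t)]

lemma exists_hasDerivAt_halfDistSqDeriv {A B : ℝ} (hA : 0 ≤ A) (hAB : 1 < A ^ 2 - B ^ 2)
    (t : ℝ) : ∃ d, HasDerivAt (halfDistSqDeriv A B) d t ∧ 1 ≤ d := by
  set F := A * cosh t + B * sinh t
  set F' := A * sinh t + B * cosh t
  set K := A ^ 2 - B ^ 2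
  have hF : 1 < F := one_lt_cosh_comb hA hAB t
  have hid : F ^ 2 - F' ^ 2 = K := by
    linear_combination (A ^ 2 - B ^ 2) * cosh_sq_sub_sinh_sq t
  set S := √(F ^ 2 - 1)
  have hS2 : S ^ 2 = F ^ 2 - 1 := sq_sqrt (by nlinarith)
  have hS : 0 < S := sqrt_pos.2 (by nlinarith)
  set φ := arcosh F
  have hφS : S ≤ φ * F := by
    simpa only [sinh_arcosh hF.le, cosh_arcosh hF.le] using sinh_le_mul_cosh (arcosh_nonneg hF.le)
  have dF : HasDerivAt (fun u => A * cosh u + B * sinh u) F' t :=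
    ((hasDerivAt_cosh t).const_mul A).add ((hasDerivAt_sinh t).const_mul B)
  have dF' : HasDerivAt (fun u => A * sinh u + B * cosh u) F t :=
    ((hasDerivAt_sinh t).const_mul A).add ((hasDerivAt_cosh t).const_mul B)
  have dφ : HasDerivAt (arcosh ∘ fun u => A * cosh u + B * sinh u) (S⁻¹ * F') t :=
    (hasDerivAt_arcosh hF).comp t dF
  have dS : HasDerivAt (fun u => √((A * cosh u + B * sinh u) ^ 2 - 1)) (F * F' / S) t := by
    convert ((dF.fun_pow 2).sub_const 1).sqrt (by nlinarith) using 1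
    change F * F' / S = ((2 : ℕ) : ℝ) * F ^ (2 - 1) * F' / (2 * S)
    field_simp
    ring
  refine ⟨_, (dφ.mul dF').div dS hS.ne', ?_⟩
  change 1 ≤ ((S⁻¹ * F' * F' + φ * F) * S - φ * F' * (F * F' / S)) / S ^ 2
  -- `S = sinh φ` and `F = cosh φ`, so `S ≤ φ F` bounds the numerator below by
  -- `F'² + K - 1 = S²`
  have hφK : K - 1 ≤ φ * F * (K - 1) / S := by
    rw [le_div_iff₀ hS]; nlinarith
  have hexpr : ((S⁻¹ * F' * F' + φ * F) * S - φ * F' * (F * F' / S)) / S ^ 2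
      = (F' ^ 2 + φ * F * (K - 1) / S) / S ^ 2 := by
    field_simp
    linear_combination φ * F * hS2 + φ * F * hid
  rw [hexpr, le_div_iff₀ (by positivity)]
  linarith

lemma le_halfDistSqDeriv_sub {A B c : ℝ} (hA : 0 ≤ A) (hAB : 1 ≤ A ^ 2 - B ^ 2)
    (hc : 0 ≤ c) :
    c ≤ halfDistSqDeriv A B c - halfDistSqDeriv A B 0 := by
  rcases hAB.eq_or_lt with hAB | hAB
  · obtain ⟨s, rfl, rfl⟩ : ∃ s, A = cosh s ∧ B = sinh s := by
      refine ⟨arsinh B, ?_, (sinh_arsinh B).symm⟩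
      rw [cosh_arsinh, show 1 + B ^ 2 = A ^ 2 by linarith, sqrt_sq hA]
    rw [halfDistSqDeriv_cosh_sinh, halfDistSqDeriv_cosh_sinh]
    linarith
  · have hmono : Monotone fun t => halfDistSqDeriv A B t - t := by
      refine monotone_of_deriv_nonneg (fun t => ?_) fun t => ?_ <;>
        obtain ⟨d, hd, hd1⟩ := exists_hasDerivAt_halfDistSqDeriv hA hAB t
      · exact (hd.fun_sub (hasDerivAt_id' t)).differentiableAt
      · rw [(hd.fun_sub (hasDerivAt_id' t)).deriv]
        linarith
    linarith [hmono hc]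

end GeodesicDistance

section Minkowski

variable {n : ℕ}

lemma mink_comm (x y : Fin (n+1) → ℝ) : mink n x y = mink n y x := by
  simp only [mink, mul_comm]

lemma mink_add_left (x y z : Fin (n+1) → ℝ) : mink n (x + y) z = mink n x z + mink n y z := by
  simp only [mink, Pi.add_apply, add_mul, Finset.sum_add_distrib]; ring

lemma mink_smul_left (t : ℝ) (x y : Fin (n+1) → ℝ) : mink n (t • x) y = t * mink n x y := by
  simp only [mink, Pi.smul_apply, smul_eq_mul, mul_sub, Finset.mul_sum, mul_assoc]

lemma mink_add_right (x y z : Fin (n+1) → ℝ) : mink n x (y + z) = mink n x y + mink n x z := by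
  rw [mink_comm, mink_add_left, mink_comm y, mink_comm z]

lemma mink_smul_right (t : ℝ) (x y : Fin (n+1) → ℝ) :
    mink n x (t • y) = t * mink n x y := by
  rw [mink_comm, mink_smul_left, mink_comm]

lemma mink_zero_left (x : Fin (n+1) → ℝ) : mink n 0 x = 0 := by
  simpa using mink_smul_left 0 0 x

lemma mink_zero_right (x : Fin (n+1) → ℝ) : mink n x 0 = 0 := by
  rw [mink_comm, mink_zero_left]

def minkCLM (n : ℕ) (w : Fin (n+1) → ℝ) : (Fin (n+1) → ℝ) →L[ℝ] ℝ :=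
  LinearMap.toContinuousLinearMap
    { toFun := fun v => mink n v w
      map_add' := fun x y => mink_add_left x y w
      map_smul' := fun t x => mink_smul_left t x w }

lemma sum_castSucc_sq {x : Fin (n+1) → ℝ} (hx : IsHyp n x) :
    ∑ i : Fin n, x i.castSucc ^ 2 = x (Fin.last n) ^ 2 - 1 := by
  have := hx.1; simp only [mink, ← sq] at this; linarith

lemma IsHyp.one_le_last {x : Fin (n+1) → ℝ} (hx : IsHyp n x) : 1 ≤ x (Fin.last n) := by
  have hsum := sum_castSucc_sq hx
  have : 0 ≤ ∑ i : Fin n, x i.castSucc ^ 2 := Finset.sum_nonneg fun i _ => sq_nonneg _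
  nlinarith [hx.2]

lemma IsHyp.abs_le_last {x : Fin (n+1) → ℝ} (hx : IsHyp n x) (i : Fin (n+1)) :
    |x i| ≤ x (Fin.last n) := by
  refine Fin.lastCases (abs_of_pos hx.2).le (fun j => abs_le_of_sq_le_sq ?_ hx.2.le) i
  have := Finset.single_le_sum (fun i _ => sq_nonneg (x i.castSucc)) (Finset.mem_univ j)
  linarith [sum_castSucc_sq hx]

lemma mink_le_neg_one {x y : Fin (n+1) → ℝ} (hx : IsHyp n x) (hy : IsHyp n y) :
    mink n x y ≤ -1 := by
  have cs := Finset.sum_mul_sq_le_sq_mul_sq Finset.univ (fun i : Fin n => x i.castSucc)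
    (fun i : Fin n => y i.castSucc)
  rw [sum_castSucc_sq hx, sum_castSucc_sq hy] at cs
  have hx1 := hx.one_le_last
  have hy1 := hy.one_le_last
  set a := x (Fin.last n)
  set b := y (Fin.last n)
  have hS : ∑ i : Fin n, x i.castSucc * y i.castSucc ≤ a * b - 1 :=
    (abs_le_of_sq_le_sq' (by nlinarith [sq_nonneg (a - b)]) (by nlinarith)).2
  simp only [mink]
  linarith

lemma IsTang.mink_self_nonneg {x v : Fin (n+1) → ℝ} (hx : IsHyp n x) (hv : IsTang n x v) :
    0 ≤ mink n v v := by
  have cs := Finset.sum_mul_sq_le_sq_mul_sq Finset.univ (fun i : Fin n => x i.castSucc)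
    (fun i : Fin n => v i.castSucc)
  have hxv : ∑ i : Fin n, x i.castSucc * v i.castSucc = x (Fin.last n) * v (Fin.last n) := by
    have := hv; simp only [IsTang, mink] at this; linarith
  rw [sum_castSucc_sq hx, hxv] at cs
  have hx1 := hx.one_le_last
  have hvsum : 0 ≤ ∑ i : Fin n, v i.castSucc ^ 2 := Finset.sum_nonneg fun i _ => sq_nonneg _
  have hsq : x (Fin.last n) ^ 2 * v (Fin.last n) ^ 2
      ≤ x (Fin.last n) ^ 2 * ∑ i : Fin n, v i.castSucc ^ 2 := by nlinarith
  have := le_of_mul_le_mul_left hsq (by positivity)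
  simp only [mink, ← sq]
  linarith

lemma IsTang.mink_sq_le {x v w : Fin (n+1) → ℝ} (hx : IsHyp n x) (hv : IsTang n x v)
    (hw : IsTang n x w) : mink n v w ^ 2 ≤ mink n v v * mink n w w := by
  have hquad : ∀ t : ℝ, 0 ≤ mink n w w * (t * t) + 2 * mink n v w * t + mink n v v := by
    intro t
    have hvt : IsTang n x (v + t • w) := by
      unfold IsTang at *; rw [mink_add_right, mink_smul_right, hv, hw]; ring
    have := hvt.mink_self_nonneg hx
    simp only [mink_add_left, mink_add_right, mink_smul_left, mink_smul_right,
      mink_comm w v] at this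
    linarith
  have := discrim_le_zero hquad
  unfold discrim at this
  nlinarith

end Minkowski

section HyperbolicDistance

variable {n : ℕ} {x y z : Fin (n+1) → ℝ}

lemma hdist_eq_arcosh (x y : Fin (n+1) → ℝ) : hdist n x y = arcosh (-mink n x y) := rfl

lemma one_le_neg_mink (hx : IsHyp n x) (hy : IsHyp n y) : 1 ≤ -mink n x y := by
  linarith [mink_le_neg_one hx hy]

lemma hdist_nonneg (hx : IsHyp n x) (hy : IsHyp n y) : 0 ≤ hdist n x y :=
  arcosh_nonneg (one_le_neg_mink hx hy)

lemma cosh_hdist (hx : IsHyp n x) (hy : IsHyp n y) : cosh (hdist n x y) = -mink n x y :=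
  cosh_arcosh (one_le_neg_mink hx hy)

lemma sinh_hdist_nonneg (hx : IsHyp n x) (hy : IsHyp n y) : 0 ≤ sinh (hdist n x y) :=
  sinh_nonneg_iff.2 (hdist_nonneg hx hy)

lemma sinh_hdist_sq (hx : IsHyp n x) (hy : IsHyp n y) :
    sinh (hdist n x y) ^ 2 = mink n x y ^ 2 - 1 := by
  have := cosh_sq_sub_sinh_sq (hdist n x y)
  rw [cosh_hdist hx hy] at this
  linarith

lemma hdist_comm (x y : Fin (n+1) → ℝ) : hdist n x y = hdist n y x := by
  rw [hdist_eq_arcosh, mink_comm, hdist_eq_arcosh]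

/-- The orthogonal projection of `y` onto the tangent space `T_x ℍⁿ`. -/
def tproj (n : ℕ) (x y : Fin (n+1) → ℝ) : Fin (n+1) → ℝ := y + mink n x y • x

lemma isTang_tproj (hx : IsHyp n x) (y : Fin (n+1) → ℝ) : IsTang n x (tproj n x y) := by
  rw [IsTang, tproj, mink_add_right, mink_smul_right, hx.1]; ring

lemma mink_tproj_tproj (hx : IsHyp n x) (y z : Fin (n+1) → ℝ) :
    mink n (tproj n x y) (tproj n x z) = mink n y z + mink n x y * mink n x z := by
  simp only [tproj, mink_add_left, mink_add_right, mink_smul_left, mink_smul_right, hx.1,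
    mink_comm y x]
  ring

lemma abs_mink_add_mul_le (hx : IsHyp n x) (hy : IsHyp n y) (hz : IsHyp n z) :
    |mink n y z + mink n x y * mink n x z| ≤ sinh (hdist n x y) * sinh (hdist n x z) := by
  have cs := (isTang_tproj hx y).mink_sq_le hx (isTang_tproj hx z)
  rw [mink_tproj_tproj hx, mink_tproj_tproj hx, mink_tproj_tproj hx, hy.1, hz.1] at cs
  refine abs_le_of_sq_le_sq ?_ (mul_nonneg (sinh_hdist_nonneg hx hy) (sinh_hdist_nonneg hx hz))
  rw [mul_pow, sinh_hdist_sq hx hy, sinh_hdist_sq hx hz]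
  linarith

lemma hdist_triangle (hx : IsHyp n x) (hy : IsHyp n y) (hz : IsHyp n z) :
    hdist n y z ≤ hdist n x y + hdist n x z := by
  have hcosh : cosh (hdist n y z) ≤ cosh (hdist n x y + hdist n x z) := by
    rw [cosh_add, cosh_hdist hy hz, cosh_hdist hx hy, cosh_hdist hx hz]
    linarith [neg_abs_le (mink n y z + mink n x y * mink n x z), abs_mink_add_mul_le hx hy hz]
  rwa [cosh_le_cosh, abs_of_nonneg (hdist_nonneg hy hz),
    abs_of_nonneg (add_nonneg (hdist_nonneg hx hy) (hdist_nonneg hx hz))] at hcosh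

lemma hlog_eq_smul_tproj (x y : Fin (n+1) → ℝ) :
    hlog n x y = (hdist n x y / sinh (hdist n x y)) • tproj n x y := by
  rw [hlog, hdir, smul_smul, div_eq_mul_inv, tproj]

lemma mink_hlog_hlog (hx : IsHyp n x) (y z : Fin (n+1) → ℝ) :
    mink n (hlog n x y) (hlog n x z)
      = hdist n x y / sinh (hdist n x y) * (hdist n x z / sinh (hdist n x z))
        * (mink n y z + mink n x y * mink n x z) := by
  rw [hlog_eq_smul_tproj, hlog_eq_smul_tproj, mink_smul_left, mink_smul_right,
    mink_tproj_tproj hx]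
  ring

lemma abs_mink_hlog_hlog_le (hx : IsHyp n x) (hy : IsHyp n y) (hz : IsHyp n z) :
    |mink n (hlog n x y) (hlog n x z)| ≤ hdist n x y * hdist n x z := by
  have hcy := div_sinh_nonneg (hdist_nonneg hx hy)
  have hcz := div_sinh_nonneg (hdist_nonneg hx hz)
  calc |mink n (hlog n x y) (hlog n x z)|
      = hdist n x y / sinh (hdist n x y) * (hdist n x z / sinh (hdist n x z))
        * |mink n y z + mink n x y * mink n x z| := by
        rw [mink_hlog_hlog hx, abs_mul, abs_of_nonneg (mul_nonneg hcy hcz)]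
    _ ≤ hdist n x y / sinh (hdist n x y) * (hdist n x z / sinh (hdist n x z))
        * (sinh (hdist n x y) * sinh (hdist n x z)) :=
        mul_le_mul_of_nonneg_left (abs_mink_add_mul_le hx hy hz) (mul_nonneg hcy hcz)
    _ = hdist n x y * hdist n x z := by
        linear_combination
          hdist n x z / sinh (hdist n x z) * sinh (hdist n x z) * div_sinh_mul_sinh (hdist n x y)
            + hdist n x y * div_sinh_mul_sinh (hdist n x z)

end HyperbolicDistance

section StrongConvexity

variable {n : ℕ} {p q x : Fin (n+1) → ℝ}

lemma hlog_eq_zero_of_hdist_eq_zero {x y : Fin (n+1) → ℝ} (h : hdist n x y = 0) :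
    hlog n x y = 0 := by
  rw [hlog, h, zero_smul]

/-- Strong convexity of `½ d(·, x)²` along the unit-speed geodesic `γ` from `p` to `q`, on which
`cosh d(γ t, x) = A cosh t + B sinh t` with `A` and `B` as below. -/
lemma sq_hdist_le_mink_hlog_add (hp : IsHyp n p) (hq : IsHyp n q) (hx : IsHyp n x) :
    hdist n p q ^ 2 ≤ mink n (hlog n p x) (hlog n p q) + mink n (hlog n q x) (hlog n q p) := by
  rcases (hdist_nonneg hp hq).eq_or_lt with hc | hc
  · rw [← hc, hlog_eq_zero_of_hdist_eq_zero hc.symm,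
      hlog_eq_zero_of_hdist_eq_zero ((hdist_comm q p).trans hc.symm), mink_zero_right,
      mink_zero_right]
    simp
  have hs : 0 < sinh (hdist n p q) := sinh_pos_iff.2 hc
  have hcosh := cosh_hdist hp hq
  have hsinh := sinh_hdist_sq hp hq
  have hA := one_le_neg_mink hp hx
  have hA' := one_le_neg_mink hq hx
  set c := hdist n p q with hc_def
  set A := -mink n p x
  set B := (-mink n q x - mink n p x * mink n p q) / sinh c
  have hAB : 1 ≤ A ^ 2 - B ^ 2 := by
    have hB : |B| ≤ sinh (hdist n p x) := by
      have h := abs_mink_add_mul_le hp hx hq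
      rwa [abs_div, abs_of_pos hs, div_le_iff₀ hs, mink_comm q x, ← abs_neg, neg_sub',
        sub_neg_eq_add, neg_neg]
    have := sq_le_sq' (abs_le.1 hB).1 (abs_le.1 hB).2
    rw [sinh_hdist_sq hp hx] at this
    linarith
  have hFc : A * cosh c + B * sinh c = -mink n q x := by
    rw [hcosh, div_mul_cancel₀ _ hs.ne']; ring
  have h0 : mink n (hlog n p x) (hlog n p q) = -c * halfDistSqDeriv A B 0 := by
    rw [halfDistSqDeriv, cosh_zero, sinh_zero, mink_hlog_hlog hp,
      ← sinh_arcosh (by simpa using hA)]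
    simp only [mul_one, mul_zero, add_zero, zero_add]
    rw [← hdist_eq_arcosh, ← hc_def, mink_comm x q]
    simp only [B]
    ring
  have h1 : mink n (hlog n q x) (hlog n q p) = c * halfDistSqDeriv A B c := by
    rw [halfDistSqDeriv, hFc, mink_hlog_hlog hq, ← sinh_arcosh hA', ← hdist_eq_arcosh,
      hdist_comm q p, ← hc_def, mink_comm x p, mink_comm q p, hcosh]
    simp only [A, B]
    field_simp
    linear_combination hdist n q x * mink n p x / sinh (hdist n q x) * hsinh
  nlinarith [le_halfDistSqDeriv_sub (by linarith) hAB hc.le]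

end StrongConvexity

section CenterOfMass

variable {n : ℕ} {μ : Measure (Fin (n+1) → ℝ)} {c p q x y : Fin (n+1) → ℝ} {r : ℝ}

lemma measurable_sinhc : Measurable sinhc :=
  Measurable.ite (measurableSet_singleton 0) measurable_const (by fun_prop)

lemma measurable_hdist (x : Fin (n+1) → ℝ) : Measurable (hdist n x) := by
  unfold hdist acosh mink; fun_prop

lemma measurable_hlog (x : Fin (n+1) → ℝ) : Measurable (hlog n x) := by
  unfold hlog hdir hdist acosh mink; fun_prop

lemma MeasureTheory.Integrable.mink_left {f : (Fin (n+1) → ℝ) → Fin (n+1) → ℝ}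
    (hf : Integrable f μ) (w : Fin (n+1) → ℝ) : Integrable (fun y => mink n (f y) w) μ :=
  (minkCLM n w).integrable_comp hf

lemma integral_mink_left {f : (Fin (n+1) → ℝ) → Fin (n+1) → ℝ} (hf : Integrable f μ)
    (w : Fin (n+1) → ℝ) : ∫ y, mink n (f y) w ∂μ = mink n (∫ y, f y ∂μ) w :=
  (minkCLM n w).integral_comp_comm hf

def hypBase (n : ℕ) : Fin (n+1) → ℝ := Pi.single (Fin.last n) 1

lemma mink_hypBase (y : Fin (n+1) → ℝ) : mink n (hypBase n) y = -y (Fin.last n) := by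
  simp [mink, hypBase, (Fin.castSucc_lt_last _).ne]

lemma isHyp_hypBase : IsHyp n (hypBase n) := by
  refine ⟨?_, by simp [hypBase]⟩
  rw [mink_hypBase]; simp [hypBase]

lemma norm_le_of_hdist_le (hc : IsHyp n c) (hy : IsHyp n y) (hcy : hdist n c y ≤ r) :
    ‖y‖ ≤ cosh (hdist n (hypBase n) c + r) := by
  have hlast : y (Fin.last n) = cosh (hdist n (hypBase n) y) := by
    rw [cosh_hdist isHyp_hypBase hy, mink_hypBase, neg_neg]
  have htri : hdist n (hypBase n) y ≤ hdist n (hypBase n) c + r := by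
    linarith [hdist_triangle hc isHyp_hypBase hy, hdist_comm (hypBase n) c]
  refine (pi_norm_le_iff_of_nonneg (by positivity)).2 fun i => ?_
  rw [Real.norm_eq_abs]
  refine (hy.abs_le_last i).trans (hlast ▸ cosh_le_cosh.2 ?_)
  rwa [abs_of_nonneg (hdist_nonneg isHyp_hypBase hy),
    abs_of_nonneg ((hdist_nonneg isHyp_hypBase hy).trans htri)]

lemma integrable_id_of_ae_hdist_le [IsFiniteMeasure μ] (hc : IsHyp n c)
    (hμ : ∀ᵐ y ∂μ, IsHyp n y ∧ hdist n c y ≤ r) : Integrable (fun y => y) μ :=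
  Integrable.of_bound aestronglyMeasurable_id _
    (hμ.mono fun _ hy => norm_le_of_hdist_le hc hy.1 hy.2)

lemma integrable_tproj [IsFiniteMeasure μ] (hc : IsHyp n c)
    (hμ : ∀ᵐ y ∂μ, IsHyp n y ∧ hdist n c y ≤ r) (x : Fin (n+1) → ℝ) :
    Integrable (tproj n x) μ := by
  have hid := integrable_id_of_ae_hdist_le hc hμ
  have hmink : Integrable (fun y => mink n x y) μ := by
    simpa only [mink_comm] using hid.mink_left x
  exact hid.add (hmink.smul_const x)

lemma sinhc_smul_hlog (h : hdist n x y ≠ 0) :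
    sinhc (hdist n x y) • hlog n x y = tproj n x y := by
  have hsinh : sinh (hdist n x y) ≠ 0 := sinh_ne_zero.2 h
  rw [hlog_eq_smul_tproj, smul_smul, sinhc, if_neg h, div_mul_div_cancel₀ h,
    div_self hsinh, one_smul]

lemma norm_hlog_le_norm_tproj (hx : IsHyp n x) (hy : IsHyp n y) :
    ‖hlog n x y‖ ≤ ‖tproj n x y‖ := by
  have hd := hdist_nonneg hx hy
  rw [hlog_eq_smul_tproj, norm_smul, Real.norm_eq_abs, abs_of_nonneg (div_sinh_nonneg hd)]
  exact mul_le_of_le_one_left (norm_nonneg _) (div_sinh_le_one hd)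

lemma norm_sinhc_smul_hlog_le_norm_tproj (x y : Fin (n+1) → ℝ) :
    ‖sinhc (hdist n x y) • hlog n x y‖ ≤ ‖tproj n x y‖ := by
  by_cases h : hdist n x y = 0
  · simp [hlog_eq_zero_of_hdist_eq_zero h]
  · rw [sinhc_smul_hlog h]

lemma integrable_hlog [IsFiniteMeasure μ] (hc : IsHyp n c)
    (hμ : ∀ᵐ y ∂μ, IsHyp n y ∧ hdist n c y ≤ r) (hx : IsHyp n x) :
    Integrable (hlog n x) μ :=
  (integrable_tproj hc hμ x).mono (measurable_hlog x).aestronglyMeasurable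
    (hμ.mono fun _ hy => norm_hlog_le_norm_tproj hx hy.1)

lemma integrable_sinhc_smul_hlog [IsFiniteMeasure μ] (hc : IsHyp n c)
    (hμ : ∀ᵐ y ∂μ, IsHyp n y ∧ hdist n c y ≤ r) (x : Fin (n+1) → ℝ) :
    Integrable (fun y => sinhc (hdist n x y) • hlog n x y) μ :=
  (integrable_tproj hc hμ x).mono
    ((measurable_sinhc.comp (measurable_hdist x)).smul (measurable_hlog x)).aestronglyMeasurable
    (ae_of_all _ fun y => norm_sinhc_smul_hlog_le_norm_tproj x y)

lemma integral_mink_eq_zero {f : (Fin (n+1) → ℝ) → Fin (n+1) → ℝ} (hf : Integrable f μ)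
    (hf0 : ∫ y, f y ∂μ = 0) (w : Fin (n+1) → ℝ) : ∫ y, mink n (f y) w ∂μ = 0 := by
  rw [integral_mink_left hf, hf0, mink_zero_left]

lemma hdist_le_of_integral_sinhc_smul_hlog_eq_zero [IsFiniteMeasure μ] [NeZero μ] (hc : IsHyp n c)
    (hq : IsHyp n q) (hμ : ∀ᵐ y ∂μ, IsHyp n y ∧ hdist n c y ≤ r)
    (hq0 : ∫ y, sinhc (hdist n q y) • hlog n q y ∂μ = 0) : hdist n q c ≤ r := by
  by_contra! hr
  have hI := integrable_sinhc_smul_hlog hc hμ q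
  have hpos : ∀ᵐ y ∂μ, 0 < mink n (sinhc (hdist n q y) • hlog n q y) (tproj n q c) := by
    filter_upwards [hμ] with y ⟨hy, hcy⟩
    have hqy : 0 < hdist n q y := by
      linarith [hdist_triangle hy hq hc, hdist_comm y q, hdist_comm y c]
    have hcosh : cosh (hdist n c y) < cosh (hdist n q c) := by
      rw [cosh_lt_cosh, abs_of_nonneg (hdist_nonneg hc hy), abs_of_nonneg (hdist_nonneg hq hc)]
      linarith
    -- the integrand is `cosh d(q,y) cosh d(q,c) - cosh d(c,y)`
    rw [sinhc_smul_hlog hqy.ne', mink_tproj_tproj hq]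
    rw [cosh_hdist hc hy, cosh_hdist hq hc] at hcosh
    nlinarith [one_le_neg_mink hq hy, one_le_neg_mink hq hc, mink_comm y c]
  have hzero := (integral_eq_zero_iff_of_nonneg_ae (hpos.mono fun _ h => h.le)
    (hI.mink_left _)).1 (integral_mink_eq_zero hI hq0 _)
  obtain ⟨y, hy0, hypos⟩ := (hzero.and hpos).exists
  exact hypos.ne' hy0

lemma mink_hlog_sub_sinhc_smul_le (hq : IsHyp n q) (hy : IsHyp n y) (hp : IsHyp n p) {R : ℝ}
    (hR : hdist n q y ≤ R) :
    mink n (hlog n q y) (hlog n q p) - mink n (sinhc (hdist n q y) • hlog n q y) (hlog n q p)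
      ≤ (sinh R - R) * hdist n q p := by
  set m := mink n (hlog n q y) (hlog n q p)
  set d := hdist n q y
  have hs := one_le_sinhc d
  have hm : |m| ≤ d * hdist n q p := abs_mink_hlog_hlog_le hq hy hp
  rw [mink_smul_left]
  calc m - sinhc d * m ≤ (sinhc d - 1) * |m| := by nlinarith [neg_abs_le m]
    _ ≤ (sinhc d - 1) * (d * hdist n q p) := mul_le_mul_of_nonneg_left hm (by linarith)
    _ = (sinh d - d) * hdist n q p := by rw [← mul_sinhc_sub_one]; ring
    _ ≤ (sinh R - R) * hdist n q p :=
      mul_le_mul_of_nonneg_right (sinh_sub_id_strictMono.monotone hR) (hdist_nonneg hq hp)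

lemma sq_hdist_le_integral_mink_hlog [IsProbabilityMeasure μ] (hc : IsHyp n c)
    (hp : IsHyp n p) (hq : IsHyp n q) (hμ : ∀ᵐ y ∂μ, IsHyp n y ∧ hdist n c y ≤ r)
    (hp0 : ∫ y, hlog n p y ∂μ = 0) :
    hdist n p q ^ 2 ≤ ∫ y, mink n (hlog n q y) (hlog n q p) ∂μ := by
  have hIp := integrable_hlog hc hμ hp
  have hIp' := hIp.mink_left (hlog n p q)
  have hIq' := (integrable_hlog hc hμ hq).mink_left (hlog n q p)
  calc hdist n p q ^ 2 = ∫ _, hdist n p q ^ 2 ∂μ := by simp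
    _ ≤ ∫ y, (mink n (hlog n p y) (hlog n p q) + mink n (hlog n q y) (hlog n q p)) ∂μ :=
      integral_mono_ae (integrable_const _) (hIp'.add hIq')
        (hμ.mono fun y hy => sq_hdist_le_mink_hlog_add hp hq hy.1)
    _ = ∫ y, mink n (hlog n q y) (hlog n q p) ∂μ := by
      rw [integral_add hIp' hIq', integral_mink_eq_zero hIp hp0, zero_add]

lemma integral_mink_hlog_le [IsProbabilityMeasure μ] (hc : IsHyp n c) (hp : IsHyp n p)
    (hq : IsHyp n q) (hμ : ∀ᵐ y ∂μ, IsHyp n y ∧ hdist n c y ≤ r)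
    (hq0 : ∫ y, sinhc (hdist n q y) • hlog n q y ∂μ = 0) (hqc : hdist n q c ≤ r) :
    ∫ y, mink n (hlog n q y) (hlog n q p) ∂μ ≤ (sinh (2 * r) - 2 * r) * hdist n p q := by
  have hI := integrable_sinhc_smul_hlog hc hμ q
  have hI1 := (integrable_hlog hc hμ hq).mink_left (hlog n q p)
  have hI2 := hI.mink_left (hlog n q p)
  calc ∫ y, mink n (hlog n q y) (hlog n q p) ∂μ
      = ∫ y, (mink n (hlog n q y) (hlog n q p)
          - mink n (sinhc (hdist n q y) • hlog n q y) (hlog n q p)) ∂μ := by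
        rw [integral_sub hI1 hI2, integral_mink_eq_zero hI hq0, sub_zero]
    _ ≤ ∫ _, (sinh (2 * r) - 2 * r) * hdist n q p ∂μ :=
      integral_mono_ae (hI1.sub hI2) (integrable_const _) (hμ.mono fun y hy =>
        mink_hlog_sub_sinhc_smul_le hq hy.1 hp
          (by linarith [hdist_triangle hc hq hy.1, hdist_comm c q]))
    _ = (sinh (2 * r) - 2 * r) * hdist n p q := by simp [hdist_comm q p]

end CenterOfMass

/-- `2r(sinhc(2r) - 1) = (4/3)r³ + O(r⁵)` as `r → 0`; moreover, if a
probability measure `μ` on hyperbolic `n`-space (hyperboloid model) is supported in a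
ball of radius `r`, then its center of mass `p` (characterized by `∫ exp_p⁻¹ dμ = 0`)
and its cosh-center of mass `q` (characterized by `∫ sinhc(d(q,·)) exp_q⁻¹ dμ = 0`)
satisfy `d(p,q) ≤ 2r(sinhc(2r) - 1)`. -/
theorem stmt19 :
    (fun r : ℝ => 2 * r * (sinhc (2 * r) - 1) - (4/3) * r ^ 3)
      =O[nhds 0] (fun r : ℝ => r ^ 5)
    ∧ ∀ (n : ℕ) (r : ℝ), 0 < r →
        ∀ (μ : Measure (Fin (n+1) → ℝ)), IsProbabilityMeasure μ →
        ∀ (c p q : Fin (n+1) → ℝ), IsHyp n c → IsHyp n p → IsHyp n q →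
        (∀ᵐ x ∂μ, IsHyp n x ∧ hdist n c x ≤ r) →
        (∫ x, hlog n p x ∂μ) = 0 →
        (∫ x, sinhc (hdist n q x) • hlog n q x ∂μ) = 0 →
        hdist n p q ≤ 2 * r * (sinhc (2 * r) - 1) := by
  refine ⟨sinhc_bound_isBigO, fun n r hr μ _ c p q hc hp hq hμ hp0 hq0 => ?_⟩
  have hqc := hdist_le_of_integral_sinhc_smul_hlog_eq_zero hc hq hμ hq0
  have hlow := sq_hdist_le_integral_mink_hlog hc hp hq hμ hp0
  have hup := integral_mink_hlog_le hc hp hq hμ hq0 hqc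
  have hK : 0 ≤ sinh (2 * r) - 2 * r := sub_nonneg.2 (self_le_sinh_iff.2 (by linarith))
  rw [mul_sinhc_sub_one]
  nlinarith [hdist_nonneg hp hq]
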